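/- (Half-cycle shortest path) If C is a minimum-weight cycle in an undirected graph with non-negative weights, and P is a subpath of C with weight wt(P) satisfying 2·wt(P) ≤ wt(C), then P is a shortest path in G between its endpoints. -/

import Mathlib

open scoped ENNReal

variable {V : Type*}

/-- `p` is a walk from `s` to `t` along edges of `E`. -/
def IsWalkFrom (E : V → V → Prop) (s t : V) (p : List V) : Prop :=
  List.Chain E s p ∧ (s :: p).getLast (List.cons_ne_nil s p) = t

/-- Total weight of the walk `s :: p`. -/
noncomputable def walkWeight (w : V → V → NNReal) (s : V) (p : List V) : ℝ≥0∞ :=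
  (List.zipWith (fun a b => ((w a b : ℝ≥0∞))) (s :: p) p).sum

/-- `h`-hop-bounded shortest-path distance (`⊤` if no walk with at most `h` edges exists). -/
noncomputable def hopDist (E : V → V → Prop) (w : V → V → NNReal) (h : ℕ) (s t : V) : ℝ≥0∞ :=
  ⨅ (p : List V) (_ : IsWalkFrom E s t p) (_ : p.length ≤ h), walkWeight w s p

/-- Shortest-path distance (`⊤` if no walk exists). -/
noncomputable def gdist (E : V → V → Prop) (w : V → V → NNReal) (s t : V) : ℝ≥0∞ :=
  ⨅ (p : List V) (_ : IsWalkFrom E s t p), walkWeight w s p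

/-- `c` is a simple (directed) cycle through `v`: a closed walk from `v` to `v`
with at least one edge and no repeated vertices. -/
def IsCycleThrough (E : V → V → Prop) (v : V) (c : List V) : Prop :=
  IsWalkFrom E v v c ∧ c ≠ [] ∧ c.Nodup

/-- `c` is a simple cycle through `v` in an undirected graph (at least 3 edges,
so that no edge is traversed twice). -/
def IsUCycleThrough (E : V → V → Prop) (v : V) (c : List V) : Prop :=
  IsWalkFrom E v v c ∧ 3 ≤ c.length ∧ c.Nodup

/-- The (undirected) edge `{a, b}` appears on the walk `s :: p`. -/
def MemEdge (s : V) (p : List V) (a b : V) : Prop :=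
  ∃ i, i + 1 ≤ p.length ∧
    ((a = (s :: p).getD i s ∧ b = (s :: p).getD (i + 1) s) ∨
     (b = (s :: p).getD i s ∧ a = (s :: p).getD (i + 1) s))

/-!
Let `P` be the arc `a → t` of the minimum cycle and `Q` the other arc `t → a`, so that
`wt P ≤ wt Q`. Any walk `a → t` can be loop-erased to a simple path `P'` that is no heavier.
The closed walk `P' Q` either contains a genuine cycle, which weighs at least `wt P + wt Q` by
minimality and hence forces `wt P ≤ wt P'`, or `Q` retraces `P'` backwards, in which case
`wt P ≤ wt Q = wt P'`.
-/

open List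

section WalkWeight

variable (w : V → V → NNReal)

@[simp]
theorem walkWeight_nil (a : V) : walkWeight w a [] = 0 := rfl

@[simp]
theorem walkWeight_cons (a x : V) (l : List V) :
    walkWeight w a (x :: l) = w a x + walkWeight w x l := by
  simp [walkWeight]

theorem walkWeight_ne_top (a : V) (l : List V) : walkWeight w a l ≠ ∞ := by
  induction l generalizing a with
  | nil => simp
  | cons x l ih => simpa using ih x

theorem walkWeight_append (a : V) (r s : List V) :
    walkWeight w a (r ++ s) =
      walkWeight w a r + walkWeight w ((a :: r).getLast (cons_ne_nil _ _)) s := by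
  induction r generalizing a with
  | nil => simp
  | cons x r ih => simp [ih, add_assoc]

theorem walkWeight_le_append (a : V) (r s : List V) :
    walkWeight w a r ≤ walkWeight w a (r ++ s) :=
  (walkWeight_append w a r s).symm ▸ le_self_add

theorem walkWeight_le_of_suffix {a x : V} {r A : List V} (h : x :: A <:+ a :: r) :
    walkWeight w x A ≤ walkWeight w a r := by
  obtain ⟨T, hT⟩ := h
  cases T with
  | nil =>
    obtain ⟨rfl, rfl⟩ := cons_eq_cons.1 hT
    exact le_rfl
  | cons b T =>
    obtain ⟨rfl, rfl⟩ := cons_eq_cons.1 (cons_append .. ▸ hT)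
    rw [show T ++ x :: A = (T ++ [x]) ++ A by simp, walkWeight_append]
    simp

end WalkWeight

namespace IsWalkFrom

variable {E : V → V → Prop} {a b c x : V} {r s : List V}

theorem iff_isChain :
    IsWalkFrom E a c r ↔ (a :: r).IsChain E ∧ (a :: r).getLast (cons_ne_nil _ _) = c :=
  Iff.rfl

theorem cons_iff : IsWalkFrom E a c (x :: r) ↔ E a x ∧ IsWalkFrom E x c r := by
  simp [iff_isChain, and_assoc]

theorem append_iff (hb : (a :: r).getLast (cons_ne_nil _ _) = b) :
    IsWalkFrom E a c (r ++ s) ↔ IsWalkFrom E a b r ∧ IsWalkFrom E b c s := by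
  have hsplit : a :: r = (a :: r).dropLast ++ [b] := by
    rw [← hb, dropLast_append_getLast]
  have hsplit' : a :: (r ++ s) = (a :: r).dropLast ++ b :: s := by
    rw [← cons_append, hsplit, append_assoc, singleton_append, ← hsplit]
  simp only [iff_isChain, hsplit', isChain_split, ← hsplit, hb]
  rw [getLast_append_of_ne_nil _ (cons_ne_nil _ _)]
  tauto

theorem append (hr : IsWalkFrom E a b r) (hs : IsWalkFrom E b c s) :
    IsWalkFrom E a c (r ++ s) :=
  (append_iff hr.2).2 ⟨hr, hs⟩

theorem of_suffix {A : List V} (h : IsWalkFrom E a c r) (hA : x :: A <:+ a :: r) :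
    IsWalkFrom E x c A :=
  ⟨h.1.suffix hA, (hA.getLast (cons_ne_nil _ _)).trans h.2⟩

theorem eq_nil_of_nodup (h : IsWalkFrom E a a r) (hr : (a :: r).Nodup) : r = [] := by
  cases r with
  | nil => rfl
  | cons x r =>
    have hlast : (x :: r).getLast (cons_ne_nil _ _) = a := (getLast_cons _).symm.trans h.2
    exact absurd (hlast ▸ getLast_mem _) (nodup_cons.1 hr).1

theorem exists_nodup_walkWeight_le (w : V → V → NNReal) (h : IsWalkFrom E a c r) :
    ∃ r', IsWalkFrom E a c r' ∧ (a :: r').Nodup ∧ walkWeight w a r' ≤ walkWeight w a r := by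
  induction r generalizing a with
  | nil => exact ⟨[], h, nodup_singleton a, le_rfl⟩
  | cons x r ih =>
    obtain ⟨hax, hr⟩ := cons_iff.1 h
    obtain ⟨r', hr', hnd, hle⟩ := ih hr
    have hle' : walkWeight w x r' ≤ walkWeight w a (x :: r) :=
      hle.trans (walkWeight_cons w a x r ▸ le_add_self)
    by_cases ha : a ∈ x :: r'
    · obtain ⟨T, r'', hT⟩ := append_of_mem ha
      have hsuf : a :: r'' <:+ x :: r' := ⟨T, hT.symm⟩
      exact ⟨r'', hr'.of_suffix hsuf, hnd.sublist hsuf.sublist,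
        (walkWeight_le_of_suffix w hsuf).trans hle'⟩
    · refine ⟨x :: r', cons_iff.2 ⟨hax, hr'⟩, nodup_cons.2 ⟨ha, hnd⟩, ?_⟩
      simpa using hle

end IsWalkFrom

section Cycles

variable {E : V → V → Prop} (w : V → V → NNReal)

/-- The cycle closes at the first vertex of `z :: s` lying on `a :: r`; `hretrace` excludes the
only way it could degenerate, namely `s` starting by walking back along the last edge of `r`. -/
theorem exists_uCycle_walkWeight_le_of_not_retrace {a y z : V} {r s : List V}
    (hr : IsWalkFrom E a y r) (hs : IsWalkFrom E y a (z :: s))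
    (hr' : (a :: r).Nodup) (hs' : (y :: z :: s).Nodup) (hretrace : ∀ T, a :: r ≠ T ++ [z, y]) :
    ∃ v c, IsUCycleThrough E v c ∧
      walkWeight w v c ≤ walkWeight w a r + walkWeight w y (z :: s) := by
  classical
  have ha : a ∈ z :: s := (IsWalkFrom.cons_iff.1 hs).2.2 ▸ getLast_mem _
  obtain ⟨x, hx⟩ := Option.isSome_iff_exists.1 (find?_isSome.2 ⟨a, ha, by simp⟩ :
    ((z :: s).find? (· ∈ a :: r)).isSome)
  obtain ⟨hxr, B, s₂, hzs, hB⟩ := find?_eq_some_iff_append.1 hx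
  simp only [decide_eq_true_eq, Bool.not_eq_true', decide_eq_false_iff_not] at hxr hB
  obtain ⟨T, A, hT⟩ := append_of_mem hxr
  have hsuf : x :: A <:+ a :: r := ⟨T, hT.symm⟩
  have hzs' : z :: s = (B ++ [x]) ++ s₂ := by simp [hzs]
  have hA : IsWalkFrom E x y A := hr.of_suffix hsuf
  have hBx : IsWalkFrom E y x (B ++ [x]) :=
    ((IsWalkFrom.append_iff (by simp)).1 (hzs' ▸ hs)).1
  have hxy : x ≠ y := by
    rintro rfl
    exact (nodup_cons.1 hs').1 (hzs ▸ mem_append_right _ mem_cons_self)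
  have hndA : (x :: A).Nodup := hr'.sublist hsuf.sublist
  have hndB : (B ++ [x]).Nodup := (nodup_cons.1 hs').2.sublist (hzs' ▸ sublist_append_left _ _)
  refine ⟨x, A ++ (B ++ [x]), ⟨hA.append hBx, ?_, ?_⟩, ?_⟩
  · by_contra! hlen
    rcases A with _ | ⟨y', _ | ⟨_, _⟩⟩
    · exact hxy hA.2
    · obtain rfl : B = [] := length_eq_zero_iff.1 (by simp at hlen; omega)
      obtain rfl : y' = y := hA.2
      obtain rfl : x = z := (cons_eq_cons.1 hzs).1.symm
      exact hretrace T hT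
    · simp at hlen; omega
  · refine nodup_append.2 ⟨(nodup_cons.1 hndA).2, hndB, fun u hu v hv huv => ?_⟩
    subst huv
    rcases mem_append.1 hv with hvB | hvx
    · exact hB u hvB (hsuf.subset (mem_cons_of_mem _ hu))
    · exact (nodup_cons.1 hndA).1 (mem_singleton.1 hvx ▸ hu)
  · rw [walkWeight_append, hA.2, hzs']
    exact add_le_add (walkWeight_le_of_suffix w hsuf) (walkWeight_le_append w _ _ _)

/-- Retraced edges are peeled off one at a time; if `s` retraces all of `r`, the two weights
agree because `w` is symmetric. -/
theorem exists_uCycle_walkWeight_le_or_walkWeight_le (hw : ∀ a b, w a b = w b a) {a y : V}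
    {r s : List V} (hr : IsWalkFrom E a y r) (hs : IsWalkFrom E y a s)
    (hr' : (a :: r).Nodup) (hs' : (y :: s).Nodup) :
    (∃ v c, IsUCycleThrough E v c ∧
        walkWeight w v c ≤ walkWeight w a r + walkWeight w y s) ∨
      walkWeight w y s ≤ walkWeight w a r := by
  induction r using reverseRecOn generalizing s y with
  | nil =>
    obtain rfl : a = y := hr.2
    simp [hs.eq_nil_of_nodup hs']
  | append_singleton r y' ih =>
    obtain rfl : y = y' := by simpa using hr.2.symm
    set x := (a :: r).getLast (cons_ne_nil _ _) with hx
    obtain ⟨hr₁, -⟩ := (IsWalkFrom.append_iff hx.symm).1 hr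
    rcases s with _ | ⟨z, s⟩
    · simp
    by_cases hzx : z = x
    · subst hzx
      obtain ⟨-, hs₁⟩ := IsWalkFrom.cons_iff.1 hs
      have hwr : walkWeight w a (r ++ [y]) = walkWeight w a r + w x y := by
        simp [walkWeight_append, ← hx]
      rw [hwr, walkWeight_cons, hw y x]
      rcases ih hr₁ hs₁ (hr'.sublist (by simp)) (nodup_cons.1 hs').2 with
        ⟨v, c, hc, hle⟩ | hle
      · refine Or.inl ⟨v, c, hc, hle.trans ?_⟩
        gcongr <;> simp
      · exact Or.inr (by rw [add_comm]; gcongr)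
    · refine Or.inl <|
        exists_uCycle_walkWeight_le_of_not_retrace w hr hs hr' hs' fun T hT => hzx ?_
      rw [← cons_append, show T ++ [z, y] = (T ++ [z]) ++ [y] by simp,
        append_cancel_right_eq] at hT
      simp [hx, hT]

end Cycles

theorem stmt8_general (E : V → V → Prop) (w : V → V → NNReal)
    (hw : ∀ a b, w a b = w b a) (a : V) (p q : List V) (hp : p ≠ [])
    (hc : IsUCycleThrough E a (p ++ q))
    (hmin : ∀ (v' : V) (c' : List V), IsUCycleThrough E v' c' →
      walkWeight w a (p ++ q) ≤ walkWeight w v' c')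
    (hhalf : 2 * walkWeight w a p ≤ walkWeight w a (p ++ q)) :
    walkWeight w a p = gdist E w a (p.getLast hp) := by
  obtain ⟨hcyc, -, hnd⟩ := hc
  set t := p.getLast hp
  have ht : (a :: p).getLast (cons_ne_nil _ _) = t := getLast_cons hp
  obtain ⟨hpw, hqw⟩ := (IsWalkFrom.append_iff ht).1 hcyc
  have htq : (t :: q).Nodup :=
    nodup_cons.2 ⟨disjoint_of_nodup_append hnd (getLast_mem hp), (nodup_append.1 hnd).2.1⟩
  have hsplit : walkWeight w a (p ++ q) = walkWeight w a p + walkWeight w t q := by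
    rw [walkWeight_append, ht]
  have hpq : walkWeight w a p ≤ walkWeight w t q := by
    rwa [hsplit, two_mul, ENNReal.add_le_add_iff_left (walkWeight_ne_top w a p)] at hhalf
  refine le_antisymm (le_iInf₂ fun p₀ hp₀ => ?_) (iInf₂_le p hpw)
  obtain ⟨p', hp'w, hp'nd, hle⟩ := hp₀.exists_nodup_walkWeight_le w
  refine le_trans ?_ hle
  rcases exists_uCycle_walkWeight_le_or_walkWeight_le w hw hp'w hqw hp'nd htq with
    ⟨v, c, hc, hcle⟩ | hqp'
  · have h := (hmin v c hc).trans hcle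
    rwa [hsplit, ENNReal.add_le_add_iff_right (walkWeight_ne_top w t q)] at h
  · exact hpq.trans hqp'

theorem stmt8 (E : V → V → Prop) (hE : Symmetric E) (w : V → V → NNReal)
    (hw : ∀ a b, w a b = w b a) (a : V) (p q : List V) (hp : p ≠ [])
    (hc : IsUCycleThrough E a (p ++ q))
    (hmin : ∀ (v' : V) (c' : List V), IsUCycleThrough E v' c' →
      walkWeight w a (p ++ q) ≤ walkWeight w v' c')
    (hhalf : 2 * walkWeight w a p ≤ walkWeight w a (p ++ q)) :
    walkWeight w a p = gdist E w a (p.getLast hp) :=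
  stmt8_general E w hw a p q hp hc hmin hhalf
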